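/- arXiv:2509.20316 — 2 statements merged into one kernel-verified Lean document; each statement's English description precedes it below -/
import Mathlib

section
/- For every m ≥ 0, the Schur polynomial B_m agrees with the Rogers–Ramanujan series H through degree m−1: viewing both as elements of the formal power series ring ℤ⟦q⟧, one has H(q) − B_m(q) ∈ q^m·ℤ⟦q⟧, i.e. the coefficient of q^j in B_m equals the coefficient of q^j in H for all 0 ≤ j < m. -/
noncomputable section

open PowerSeries

/-- `(q;q)_n = ∏_{j=1}^n (1 - q^j)` in `ℤ⟦q⟧`; its constant term is `1`, so it is
invertible in `ℤ⟦q⟧`. -/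
def qqPoch (n : ℕ) : PowerSeries ℤ :=
  ∏ j ∈ Finset.range n, (1 - (PowerSeries.X : PowerSeries ℤ) ^ (j + 1))

/-- The Gaussian binomial coefficient `[r choose n]_q = (q;q)_r/((q;q)_n (q;q)_{r-n})`
for `0 ≤ n ≤ r`, and `0` otherwise. -/
def qBinom (r n : ℕ) : PowerSeries ℤ :=
  if n ≤ r then qqPoch r * PowerSeries.invOfUnit (qqPoch n * qqPoch (r - n)) 1 else 0

/-- The Schur polynomial `B_m(q) = Σ_{n≥0} q^{n(n+1)} [m−n choose n]_q`. -/
def schurB (m : ℕ) : PowerSeries ℤ :=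
  ∑ n ∈ Finset.range (m + 1),
    (PowerSeries.X : PowerSeries ℤ) ^ (n * (n + 1)) * qBinom (m - n) n

/-- The Rogers–Ramanujan series `H(q) = Σ_{n≥0} q^{n(n+1)}/(q;q)_n ∈ ℤ⟦q⟧`, defined
coefficientwise: the coefficient of `q^j` only involves the terms with `n(n+1) ≤ j`,
so the partial sum over `n ≤ j` determines it. -/
def RRHseries : PowerSeries ℤ :=
  PowerSeries.mk fun j => PowerSeries.coeff j
    (∑ n ∈ Finset.range (j + 1),
      (PowerSeries.X : PowerSeries ℤ) ^ (n * (n + 1)) * PowerSeries.invOfUnit (qqPoch n) 1)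

/-! For `2n ≤ m`, `[m-n choose n]_q = (q^{m-2n+1};q)_n / (q;q)_n ≡ 1/(q;q)_n` modulo
`q^{m-2n+1}`, so the `n`-th terms of `B_m` and of `H` agree modulo `q^{n(n+1)+m-2n+1}`, a
multiple of `q^m`. For `2n > m` both terms are multiples of `q^{n(n+1)}` with `n(n+1) ≥ 2n > m`,
and the terms of `H` with `n > m` vanish modulo `q^m` for the same reason. -/

theorem dvd_prod_sub_one {R ι : Type*} [CommRing R] {a : R} {s : Finset ι} {f : ι → R}
    (h : ∀ i ∈ s, a ∣ f i - 1) : a ∣ ∏ i ∈ s, f i - 1 := by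
  have hmod : ∏ i ∈ s, f i ≡ ∏ _i ∈ s, (1 : R) [SMOD Ideal.span {a}] :=
    SModEq.prod fun i hi => SModEq.sub_mem.2 (Ideal.mem_span_singleton.2 (h i hi))
  simpa [SModEq.sub_mem, Ideal.mem_span_singleton] using hmod

namespace PowerSeries

variable {R : Type*} [CommRing R]

theorem invOfUnit_one_mul_distrib {φ ψ : R⟦X⟧} (hφ : constantCoeff φ = 1)
    (hψ : constantCoeff ψ = 1) :
    invOfUnit (φ * ψ) 1 = invOfUnit φ 1 * invOfUnit ψ 1 := by
  refine left_inv_eq_right_inv (invOfUnit_mul _ 1 (by simp [hφ, hψ])) ?_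
  calc φ * ψ * (invOfUnit φ 1 * invOfUnit ψ 1)
      = (φ * invOfUnit φ 1) * (ψ * invOfUnit ψ 1) := by ring
    _ = 1 := by rw [mul_invOfUnit _ 1 (by simp [hφ]), mul_invOfUnit _ 1 (by simp [hψ]), one_mul]

theorem coeff_X_pow_mul_of_lt (φ : R⟦X⟧) {j k : ℕ} (h : j < k) : coeff j (X ^ k * φ) = 0 :=
  X_pow_dvd_iff.mp (dvd_mul_right _ _) j h

theorem X_pow_dvd_prod_one_sub_X_pow_sub_one (a n : ℕ) :
    (X : R⟦X⟧) ^ (a + 1) ∣ ∏ j ∈ Finset.range n, (1 - X ^ (a + j + 1)) - 1 :=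
  dvd_prod_sub_one fun j _ => by
    simpa using (pow_dvd_pow X (by omega : a + 1 ≤ a + j + 1)).neg_right

end PowerSeries

theorem constantCoeff_qqPoch (n : ℕ) : constantCoeff (qqPoch n) = 1 := by
  simp [qqPoch]

theorem qqPoch_mul_invOfUnit (n : ℕ) : qqPoch n * invOfUnit (qqPoch n) 1 = 1 :=
  mul_invOfUnit _ 1 (by simp [constantCoeff_qqPoch])

theorem qqPoch_add (a n : ℕ) :
    qqPoch (a + n) = qqPoch a * ∏ j ∈ Finset.range n, (1 - (X : ℤ⟦X⟧) ^ (a + j + 1)) := by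
  rw [qqPoch, qqPoch, Finset.prod_range_add]

theorem qBinom_add_left (a n : ℕ) :
    qBinom (a + n) n =
      (∏ j ∈ Finset.range n, (1 - (X : ℤ⟦X⟧) ^ (a + j + 1))) * invOfUnit (qqPoch n) 1 := by
  rw [qBinom, if_pos (Nat.le_add_left n a), Nat.add_sub_cancel,
    invOfUnit_one_mul_distrib (constantCoeff_qqPoch n) (constantCoeff_qqPoch a), qqPoch_add]
  linear_combination (∏ j ∈ Finset.range n, (1 - (X : ℤ⟦X⟧) ^ (a + j + 1))) *
    invOfUnit (qqPoch n) 1 * qqPoch_mul_invOfUnit a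

theorem X_pow_dvd_qBinom_add_left_sub_invOfUnit (a n : ℕ) :
    (X : ℤ⟦X⟧) ^ (a + 1) ∣ qBinom (a + n) n - invOfUnit (qqPoch n) 1 := by
  rw [qBinom_add_left, ← sub_one_mul]
  exact (X_pow_dvd_prod_one_sub_X_pow_sub_one a n).mul_right _

theorem X_pow_dvd_schurB_term_sub_RRHseries_term (m n : ℕ) :
    (X : ℤ⟦X⟧) ^ m ∣ X ^ (n * (n + 1)) * qBinom (m - n) n -
      X ^ (n * (n + 1)) * invOfUnit (qqPoch n) 1 := by
  rw [← mul_sub]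
  by_cases hn : 2 * n ≤ m
  · obtain ⟨a, rfl⟩ : ∃ a, m = a + 2 * n := ⟨m - 2 * n, by omega⟩
    have hdeg : a + 2 * n ≤ n * (n + 1) + (a + 1) := by nlinarith [Nat.le_mul_self n]
    rw [show a + 2 * n - n = a + n by omega]
    exact (pow_dvd_pow X hdeg).trans <| (pow_add (X : ℤ⟦X⟧) _ _).symm ▸
      mul_dvd_mul_left _ (X_pow_dvd_qBinom_add_left_sub_invOfUnit a n)
  · exact (pow_dvd_pow X (by nlinarith)).mul_right _

def partialRRH (N : ℕ) : ℤ⟦X⟧ :=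
  ∑ n ∈ Finset.range (N + 1), X ^ (n * (n + 1)) * invOfUnit (qqPoch n) 1

theorem coeff_RRHseries {j N : ℕ} (h : j ≤ N) : coeff j RRHseries = coeff j (partialRRH N) := by
  rw [RRHseries, coeff_mk, partialRRH, map_sum, map_sum]
  refine Finset.sum_subset (Finset.range_subset_range.mpr (by omega)) fun n _ hn => ?_
  simp only [Finset.mem_range, not_lt] at hn
  exact coeff_X_pow_mul_of_lt _ (by nlinarith)

theorem X_pow_dvd_RRHseries_sub_partialRRH (m : ℕ) :
    (X : ℤ⟦X⟧) ^ m ∣ RRHseries - partialRRH m :=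
  X_pow_dvd_iff.mpr fun j hj => by rw [map_sub, coeff_RRHseries hj.le, sub_self]

theorem X_pow_dvd_schurB_sub_partialRRH (m : ℕ) : (X : ℤ⟦X⟧) ^ m ∣ schurB m - partialRRH m := by
  rw [schurB, partialRRH, ← Finset.sum_sub_distrib]
  exact Finset.dvd_sum fun n _ => X_pow_dvd_schurB_term_sub_RRHseries_term m n

/-- `B_m` agrees with `H` through degree `m−1`:  `H − B_m ∈ q^m ℤ⟦q⟧`, i.e. the
coefficients of `q^j` in `B_m` and in `H` coincide for all `j < m`. -/
theorem schurB_agrees_with_RRH (m : ℕ) :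
    (PowerSeries.X : PowerSeries ℤ) ^ m ∣ RRHseries - schurB m ∧
    ∀ j : ℕ, j < m → PowerSeries.coeff j (schurB m) = PowerSeries.coeff j RRHseries := by
  have hdvd : (X : ℤ⟦X⟧) ^ m ∣ RRHseries - schurB m := by
    rw [← sub_sub_sub_cancel_right _ _ (partialRRH m)]
    exact dvd_sub (X_pow_dvd_RRHseries_sub_partialRRH m) (X_pow_dvd_schurB_sub_partialRRH m)
  refine ⟨hdvd, fun j hj => ?_⟩
  have hcoeff := X_pow_dvd_iff.mp hdvd j hj
  rw [map_sub, sub_eq_zero] at hcoeff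
  exact hcoeff.symm
end
end

section
/- For every m ≥ 0, the Schur polynomial B_m agrees with the finite product Q_m through degree m−1: in the formal power series ring ℤ⟦q⟧ one has B_m(q) − Q_m(q) ∈ q^m·ℤ⟦q⟧. -/
noncomputable section

open PowerSeries

/-- `Q_m(q) = ∏_{j=1}^m 1/((1 − q^{5j−3})(1 − q^{5j−2})) ∈ ℤ⟦q⟧` (with the product
reindexed by `j ↦ j+1`, i.e. exponents `5j+2` and `5j+3` for `0 ≤ j < m`); each factor
has constant term `1` and is inverted via `PowerSeries.invOfUnit`. -/
def Qprod (m : ℕ) : PowerSeries ℤ :=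
  ∏ j ∈ Finset.range m,
    PowerSeries.invOfUnit
      ((1 - (PowerSeries.X : PowerSeries ℤ) ^ (5 * j + 2)) *
        (1 - (PowerSeries.X : PowerSeries ℤ) ^ (5 * j + 3))) 1

/-!
Schur's formula `B_m = ∑_j (-1)^j q^(j(5j+3)/2) [m+1, ⌊(m-5j)/2⌋]` holds because both sides
satisfy `B_(m+2) = B_(m+1) + q^(m+2) B_m` with `B_0 = B_1 = 1`. A finite form of Jacobi's triple
product, `(q;q^5)_a (q^4;q^5)_b = ∑_j (-1)^j q^(j(5j+3)/2) [a+b, b-j]_(q^5)`, turns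
`(q;q)_(5M) Q_M` into `(q^5;q^5)_M` times a sum with the same theta coefficients. For `M ≥ 7m`,
every coefficient `q^(j(5j+3)/2)` that survives modulo `q^m` multiplies a Gaussian binomial far from
both ends of its range, where `[r, k] (q;q)_n ≡ 1`; hence `(q;q)_(5M) (B_M - Q_M) ≡ 0 mod q^m`.
Finally `B_m ≡ B_M` and `Q_m ≡ Q_M` modulo `q^m`, because consecutive terms of both sequences
differ by multiples of `q^(K+1)`.
-/

open Finset Function

lemma dvd_finsum {R ι : Type*} [NonUnitalSemiring R] {a : R} {f : ι → R} (h : ∀ i, a ∣ f i) :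
    a ∣ ∑ᶠ i, f i := by
  by_cases hf : HasFiniteSupport f
  · rw [finsum_eq_sum f hf]
    exact dvd_sum fun i _ => h i
  · rw [finsum_of_infinite_support hf]
    exact dvd_zero a

lemma finsum_eq_mul_finsum_of_shift {R : Type*} [NonUnitalNonAssocSemiring R] {F G : ℤ → R}
    (c : ℤ) (r : R) (hF : HasFiniteSupport F) (h : ∀ j, G j = r * F (j + c)) :
    ∑ᶠ j, G j = r * ∑ᶠ j, F j := by
  rw [mul_finsum' _ _ hF, finsum_congr h]
  exact finsum_comp_equiv (Equiv.addRight c) (f := fun j => r * F j)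

lemma finsum_sub_comp_add_one {M : Type*} [AddCommGroup M] {f : ℤ → M} (hf : HasFiniteSupport f) :
    ∑ᶠ j, (f j - f (j + 1)) = 0 := by
  have hf' : HasFiniteSupport fun j => f (j + 1) := hf.comp_of_injective (add_left_injective 1)
  rw [finsum_sub_distrib hf hf', sub_eq_zero]
  exact (finsum_comp_equiv (Equiv.addRight 1)).symm

lemma pow_dvd_sub_of_forall_pow_succ_dvd_sub {R : Type*} [Ring R] {x : R} {s : ℕ → R}
    (h : ∀ K, x ^ (K + 1) ∣ s (K + 1) - s K) {k K : ℕ} (hkK : k ≤ K) : x ^ k ∣ s K - s k := by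
  induction K, hkK using Nat.le_induction with
  | base => simp
  | succ K hkK ih =>
    rw [← sub_add_sub_cancel _ (s K)]
    exact dvd_add ((pow_dvd_pow x (by omega)).trans (h K)) ih

section GaussBinom

variable {R : Type*} [CommRing R] (x : R)

def qPoch (n : ℕ) : R := ∏ i ∈ range n, (1 - x ^ (i + 1))

def gaussBinom : ℕ → ℤ → R
  | 0, k => if k = 0 then 1 else 0
  | r + 1, k => gaussBinom r (k - 1) + x ^ k.toNat * gaussBinom r k

lemma qPoch_succ (n : ℕ) : qPoch x (n + 1) = qPoch x n * (1 - x ^ (n + 1)) :=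
  prod_range_succ _ _

lemma gaussBinom_succ (r : ℕ) (k : ℤ) :
    gaussBinom x (r + 1) k = gaussBinom x r (k - 1) + x ^ k.toNat * gaussBinom x r k :=
  rfl

lemma gaussBinom_eq_zero {r : ℕ} {k : ℤ} (hk : k < 0 ∨ r < k) : gaussBinom x r k = 0 := by
  induction r generalizing k with
  | zero => rw [gaussBinom, if_neg (by omega)]
  | succ r ih => rw [gaussBinom_succ, ih (by omega), ih (by omega), mul_zero, add_zero]

@[simp]
lemma gaussBinom_zero_right (r : ℕ) : gaussBinom x r 0 = 1 := by
  induction r with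
  | zero => rfl
  | succ r ih => rw [gaussBinom_succ, gaussBinom_eq_zero x (by omega), ih]; simp

lemma pow_mul_gaussBinom_congr {r : ℕ} {k : ℤ} {a b : ℕ} (h : 0 ≤ k → k ≤ r → a = b) :
    x ^ a * gaussBinom x r k = x ^ b * gaussBinom x r k := by
  by_cases hk : 0 ≤ k ∧ k ≤ r
  · rw [h hk.1 hk.2]
  · rw [gaussBinom_eq_zero x (by omega), mul_zero, mul_zero]

lemma gaussBinom_succ' (r : ℕ) (k : ℤ) :
    gaussBinom x (r + 1) k = gaussBinom x r k + x ^ (r + 1 - k).toNat * gaussBinom x r (k - 1) := by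
  induction r generalizing k with
  | zero =>
    obtain rfl | rfl | ⟨hk₀, hk₁⟩ : k = 0 ∨ k = 1 ∨ k ≠ 0 ∧ k - 1 ≠ 0 := by omega
    · simp [gaussBinom]
    · simp [gaussBinom]
    · simp [gaussBinom, hk₀, hk₁]
  | succ r ih =>
    have hmid : x ^ k.toNat * (x ^ ((r : ℤ) + 1 - k).toNat * gaussBinom x r (k - 1)) =
        x ^ (((r + 1 : ℕ) : ℤ) + 1 - k).toNat * (x ^ (k - 1).toNat * gaussBinom x r (k - 1)) := by
      simp only [← mul_assoc, ← pow_add]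
      exact pow_mul_gaussBinom_congr x (by omega)
    conv_lhs => rw [gaussBinom_succ x (r + 1), ih, ih]
    conv_rhs => rw [gaussBinom_succ x r k, gaussBinom_succ x r (k - 1)]
    rw [show (r : ℤ) + 1 - (k - 1) = ((r + 1 : ℕ) : ℤ) + 1 - k by push_cast; ring]
    linear_combination hmid

lemma gaussBinom_mul_qPoch {r k : ℕ} (hk : k ≤ r) :
    gaussBinom x r k * qPoch x k = ∏ i ∈ Ico (r - k) r, (1 - x ^ (i + 1)) := by
  induction r generalizing k with
  | zero =>
    obtain rfl : k = 0 := by omega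
    simp [qPoch]
  | succ r ih =>
    rcases k with _ | k
    · simp [qPoch]
    have hlow := ih (k := k) (by omega)
    have hhigh : gaussBinom x r ((k + 1 : ℕ) : ℤ) * qPoch x (k + 1) =
        (1 - x ^ (r - k)) * ∏ i ∈ Ico (r - k) r, (1 - x ^ (i + 1)) := by
      rcases eq_or_lt_of_le (show k ≤ r by omega) with rfl | hkr
      · rw [gaussBinom_eq_zero x (Or.inr (by omega)), Nat.sub_self, pow_zero]
        ring
      · rw [ih (k := k + 1) (by omega), prod_eq_prod_Ico_succ_bot (by omega),
          show r - (k + 1) + 1 = r - k by omega]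
    have hpow : x ^ (k + 1) * x ^ (r - k) = x ^ (r + 1) := by
      rw [← pow_add, show k + 1 + (r - k) = r + 1 by omega]
    rw [gaussBinom_succ, Int.toNat_natCast, show ((k + 1 : ℕ) : ℤ) - 1 = k by push_cast; ring,
      show r + 1 - (k + 1) = r - k by omega, prod_Ico_succ_top (by omega)]
    rw [qPoch_succ] at hhigh ⊢
    linear_combination (1 - x ^ (k + 1)) * hlow + x ^ (k + 1) * hhigh -
      (∏ i ∈ Ico (r - k) r, (1 - x ^ (i + 1))) * hpow

lemma gaussBinom_mul_qPoch_mul_qPoch {r k : ℕ} (hk : k ≤ r) :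
    gaussBinom x r k * (qPoch x k * qPoch x (r - k)) = qPoch x r := by
  rw [← mul_assoc, gaussBinom_mul_qPoch x hk, mul_comm, qPoch, qPoch,
    prod_range_mul_prod_Ico _ (Nat.sub_le r k)]

lemma pow_dvd_prod_one_sub_pow_sub_one {ι : Type*} (s : Finset ι) (e : ι → ℕ) {d : ℕ}
    (h : ∀ i ∈ s, d ≤ e i) : x ^ d ∣ ∏ i ∈ s, (1 - x ^ e i) - 1 := by
  rw [← Ideal.mem_span_singleton, ← Ideal.Quotient.eq_zero_iff_mem, map_sub, map_prod, map_one,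
    sub_eq_zero]
  refine prod_eq_one fun i hi => ?_
  rw [map_sub, map_one, sub_eq_self, Ideal.Quotient.eq_zero_iff_mem, Ideal.mem_span_singleton]
  exact pow_dvd_pow x (h i hi)

lemma pow_dvd_qPoch_sub_qPoch {n N : ℕ} (h : n ≤ N) : x ^ (n + 1) ∣ qPoch x N - qPoch x n := by
  rw [qPoch, ← prod_range_mul_prod_Ico _ h, ← qPoch, ← mul_sub_one]
  exact dvd_mul_of_dvd_right (pow_dvd_prod_one_sub_pow_sub_one x _ _ fun i hi => by
    simp only [mem_Ico] at hi; omega) _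

lemma pow_dvd_gaussBinom_mul_qPoch_sub_one {r n d : ℕ} {k : ℤ} (hk : 0 ≤ k) (hkr : k ≤ r)
    (hdk : d ≤ k + 1) (hdr : d ≤ r - k + 1) (hdn : d ≤ n + 1) :
    x ^ d ∣ gaussBinom x r k * qPoch x n - 1 := by
  lift k to ℕ using hk
  have hkr : k ≤ r := by omega
  have key : gaussBinom x r k * qPoch x n - 1 = gaussBinom x r k * (qPoch x n - qPoch x k) +
      (∏ i ∈ Ico (r - k) r, (1 - x ^ (i + 1)) - 1) := by
    rw [← gaussBinom_mul_qPoch x hkr]; ring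
  rw [key]
  refine dvd_add (dvd_mul_of_dvd_right ?_ _)
    (pow_dvd_prod_one_sub_pow_sub_one x _ _ fun i hi => by simp only [mem_Ico] at hi; omega)
  rcases le_total n k with h | h
  · exact dvd_sub_comm.1 ((pow_dvd_pow x (by omega)).trans (pow_dvd_qPoch_sub_qPoch x h))
  · exact (pow_dvd_pow x (by omega)).trans (pow_dvd_qPoch_sub_qPoch x h)

lemma hasFiniteSupport_mul_gaussBinom (c : ℤ → R) (r : ℕ) (φ : ℤ → ℤ) (a b : ℤ)
    (hφ : ∀ j, 0 ≤ φ j → φ j ≤ r → a ≤ j ∧ j ≤ b) :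
    HasFiniteSupport fun j => c j * gaussBinom x r (φ j) := by
  refine (Set.finite_Icc a b).subset fun j hj => ?_
  by_contra hab
  refine hj ?_
  show c j * gaussBinom x r (φ j) = 0
  rw [gaussBinom_eq_zero x, mul_zero]
  by_contra! h
  exact hab (hφ j h.1 h.2)

end GaussBinom

section Theta

variable {R : Type*} [CommRing R]

def rrExponent (j : ℤ) : ℕ := (j * (5 * j + 3) / 2).toNat

lemma two_mul_rrExponent (j : ℤ) : 2 * (rrExponent j : ℤ) = j * (5 * j + 3) := by
  have hnonneg : 0 ≤ j * (5 * j + 3) := by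
    rcases le_or_gt 0 j with h | h
    · positivity
    · nlinarith
  have heven : 2 ∣ j * (5 * j + 3) := by
    rcases Int.even_or_odd j with ⟨t, rfl⟩ | ⟨t, rfl⟩
    · exact ⟨t * (10 * t + 3), by ring⟩
    · exact ⟨(2 * t + 1) * (5 * t + 4), by ring⟩
  unfold rrExponent
  omega

lemma rrExponent_add_one (j : ℤ) : (rrExponent (j + 1) : ℤ) = rrExponent j + 5 * j + 4 := by
  have h₀ := two_mul_rrExponent j
  have h₁ := two_mul_rrExponent (j + 1)
  linarith

lemma natAbs_le_rrExponent (j : ℤ) : j.natAbs ≤ rrExponent j := by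
  have h := two_mul_rrExponent j
  zify
  rcases le_or_gt 0 j with hj | hj
  · rw [abs_of_nonneg hj]; nlinarith
  · rw [abs_of_neg hj]; nlinarith

def rrTheta (q : R) (j : ℤ) : R := (-1) ^ j.natAbs * q ^ rrExponent j

lemma neg_one_pow_natAbs_add_one (j : ℤ) : (-1 : R) ^ (j + 1).natAbs = -(-1) ^ j.natAbs := by
  rcases le_or_gt 0 j with hj | hj
  · rw [show (j + 1).natAbs = j.natAbs + 1 by omega, pow_succ, mul_neg_one]
  · rw [show j.natAbs = (j + 1).natAbs + 1 by omega, pow_succ, mul_neg_one, neg_neg]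

lemma pow_mul_rrTheta_add_one (q : R) {j : ℤ} {a b : ℕ} (h : (a : ℤ) + 5 * j + 4 = b) :
    q ^ a * rrTheta q (j + 1) = -(q ^ b * rrTheta q j) := by
  have hexp : q ^ a * q ^ rrExponent (j + 1) = q ^ b * q ^ rrExponent j := by
    rw [← pow_add, ← pow_add]
    congr 1
    have := rrExponent_add_one j
    omega
  rw [rrTheta, rrTheta, neg_one_pow_natAbs_add_one]
  linear_combination (-(-1 : R) ^ j.natAbs) * hexp

@[simp]
lemma rrTheta_zero (q : R) : rrTheta q 0 = 1 := by
  simp [rrTheta, rrExponent]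

end Theta

section TripleProduct

variable {R : Type*} [CommRing R] (q : R)

def qPochFive (c n : ℕ) : R := ∏ i ∈ range n, (1 - q ^ (5 * i + c))

lemma qPochFive_succ (c n : ℕ) :
    qPochFive q c (n + 1) = qPochFive q c n * (1 - q ^ (5 * n + c)) :=
  prod_range_succ _ _

def tripleProductSum (a b : ℕ) : R := ∑ᶠ j : ℤ, rrTheta q j * gaussBinom (q ^ 5) (a + b) (b - j)

lemma hasFiniteSupport_rrTheta_mul_gaussBinom (n : ℕ) (b : ℤ) :
    HasFiniteSupport fun j => rrTheta q j * gaussBinom (q ^ 5) n (b - j) :=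
  hasFiniteSupport_mul_gaussBinom _ _ _ _ (b - n) b fun _ _ _ => by omega

lemma tripleProductSum_zero_zero : tripleProductSum q 0 0 = 1 := by
  rw [tripleProductSum, finsum_eq_single _ 0 fun j hj => by simp [gaussBinom, hj]]
  simp

lemma tripleProductSum_add_one_right (a b : ℕ) :
    tripleProductSum q a (b + 1) = tripleProductSum q a b * (1 - q ^ (5 * b + 4)) := by
  set n := a + b
  have hsplit : ∀ j : ℤ, rrTheta q j * gaussBinom (q ^ 5) (a + (b + 1)) ((b + 1 : ℕ) - j) =
      rrTheta q j * gaussBinom (q ^ 5) n (b - j) +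
        rrTheta q j * (q ^ 5) ^ ((b + 1 : ℕ) - j).toNat *
          gaussBinom (q ^ 5) n ((b + 1 : ℕ) - j) := by
    intro j
    rw [← add_assoc, gaussBinom_succ, show ((b + 1 : ℕ) : ℤ) - j - 1 = b - j by push_cast; ring]
    ring
  have hshift : ∀ j : ℤ, rrTheta q j * (q ^ 5) ^ ((b + 1 : ℕ) - j).toNat *
      gaussBinom (q ^ 5) n ((b + 1 : ℕ) - j) =
        -q ^ (5 * b + 4) * (rrTheta q (j - 1) * gaussBinom (q ^ 5) n (b - (j - 1))) := by
    intro j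
    rw [show ((b + 1 : ℕ) : ℤ) - j = b - (j - 1) by push_cast; ring]
    by_cases hj : 0 ≤ (b : ℤ) - (j - 1) ∧ (b : ℤ) - (j - 1) ≤ n
    · have := pow_mul_rrTheta_add_one q (j := j - 1) (a := 5 * ((b : ℤ) - (j - 1)).toNat)
        (b := 5 * b + 4) (by omega)
      rw [sub_add_cancel] at this
      rw [← pow_mul]
      linear_combination gaussBinom (q ^ 5) n (b - (j - 1)) * this
    · rw [gaussBinom_eq_zero (q ^ 5) (by omega)]
      ring
  have hF := hasFiniteSupport_rrTheta_mul_gaussBinom q n b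
  rw [tripleProductSum, finsum_congr hsplit, finsum_add_distrib hF
    (hasFiniteSupport_mul_gaussBinom _ _ _ _ (b + 1 - n) (b + 1) fun _ _ _ => by omega),
    finsum_eq_mul_finsum_of_shift (-1) _ hF hshift, tripleProductSum]
  ring

lemma tripleProductSum_add_one_left (a b : ℕ) :
    tripleProductSum q (a + 1) b = tripleProductSum q a b * (1 - q ^ (5 * a + 1)) := by
  set n := a + b
  have hsplit : ∀ j : ℤ, rrTheta q j * gaussBinom (q ^ 5) (a + 1 + b) (b - j) =
      rrTheta q j * gaussBinom (q ^ 5) n (b - j) +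
        rrTheta q j * (q ^ 5) ^ ((n : ℤ) + 1 - (b - j)).toNat *
          gaussBinom (q ^ 5) n (b - j - 1) := by
    intro j
    rw [add_right_comm, gaussBinom_succ']
    ring
  have hshift : ∀ j : ℤ, rrTheta q j * (q ^ 5) ^ ((n : ℤ) + 1 - (b - j)).toNat *
      gaussBinom (q ^ 5) n (b - j - 1) =
        -q ^ (5 * a + 1) * (rrTheta q (j + 1) * gaussBinom (q ^ 5) n (b - (j + 1))) := by
    intro j
    rw [show (b : ℤ) - j - 1 = b - (j + 1) by ring]
    by_cases hj : 0 ≤ (b : ℤ) - (j + 1) ∧ (b : ℤ) - (j + 1) ≤ n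
    · have := pow_mul_rrTheta_add_one q (j := j) (a := 5 * a + 1)
        (b := 5 * ((n : ℤ) + 1 - (b - j)).toNat) (by omega)
      rw [← pow_mul]
      linear_combination gaussBinom (q ^ 5) n (b - (j + 1)) * this
    · rw [gaussBinom_eq_zero (q ^ 5) (by omega)]
      ring
  have hF := hasFiniteSupport_rrTheta_mul_gaussBinom q n b
  rw [tripleProductSum, finsum_congr hsplit, finsum_add_distrib hF
    (hasFiniteSupport_mul_gaussBinom _ _ _ _ (b - n - 1) b fun _ _ _ => by omega),
    finsum_eq_mul_finsum_of_shift 1 _ hF hshift, tripleProductSum]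
  ring

lemma qPoch_five_mul (n : ℕ) : qPoch q (5 * n) =
    qPochFive q 1 n * qPochFive q 2 n * qPochFive q 3 n * qPochFive q 4 n * qPochFive q 5 n := by
  induction n with
  | zero => simp [qPoch, qPochFive]
  | succ n ih =>
    rw [show 5 * (n + 1) = 5 * n + 1 + 1 + 1 + 1 + 1 by ring]
    simp only [qPoch_succ, qPochFive_succ, ih]
    ring

lemma qPochFive_five (n : ℕ) : qPochFive q 5 n = qPoch (q ^ 5) n :=
  prod_congr rfl fun i _ => by rw [← pow_mul]; ring_nf

theorem qPochFive_one_mul_qPochFive_four (a b : ℕ) :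
    qPochFive q 1 a * qPochFive q 4 b = tripleProductSum q a b := by
  induction a with
  | zero =>
    induction b with
    | zero => simp [qPochFive, tripleProductSum_zero_zero]
    | succ b ih => rw [tripleProductSum_add_one_right, ← ih, qPochFive_succ]; ring
  | succ a ih => rw [tripleProductSum_add_one_left, ← ih, qPochFive_succ]; ring

end TripleProduct

section Schur

variable {R : Type*} [CommRing R] (q : R)

def schurTerm (m : ℕ) (j : ℤ) : R := rrTheta q j * gaussBinom q (m + 1) ((m - 5 * j) / 2)

def schurAltSum (m : ℕ) : R := ∑ᶠ j : ℤ, schurTerm q m j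

/-- The defect in the recurrence `schurTerm_add_two`; being a difference in `j`, it cancels in
`schurAltSum`. -/
def schurCorrection (m : ℕ) (j : ℤ) : R :=
  (if Even ((m : ℤ) - 5 * j) then rrTheta q j * q ^ ((m - 5 * j) / 2 + 1).toNat else 0) *
    gaussBinom q (m + 1) ((m - 5 * j) / 2 + 1)

lemma hasFiniteSupport_schurTerm (m : ℕ) : HasFiniteSupport (schurTerm q m) :=
  hasFiniteSupport_mul_gaussBinom _ _ _ _ (-(m + 3)) m fun _ _ _ => by omega

lemma hasFiniteSupport_schurCorrection (m : ℕ) : HasFiniteSupport (schurCorrection q m) :=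
  hasFiniteSupport_mul_gaussBinom _ _ _ _ (-(m + 3)) m fun _ _ _ => by omega

lemma schurTerm_add_two (m : ℕ) (j : ℤ) :
    schurTerm q (m + 2) j = schurTerm q (m + 1) j + q ^ (m + 2) * schurTerm q m j +
      (schurCorrection q m j - schurCorrection q m (j + 1)) := by
  obtain ⟨k, hk⟩ : ∃ k, k = ((m : ℤ) - 5 * j) / 2 := ⟨_, rfl⟩
  have h2 : (((m + 2 : ℕ) : ℤ) - 5 * j) / 2 = k + 1 := by push_cast; omega
  simp only [schurTerm, schurCorrection, ← hk, h2]
  rcases Int.emod_two_eq_zero_or_one ((m : ℤ) - 5 * j) with hpar | hpar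
  · have h1 : (((m + 1 : ℕ) : ℤ) - 5 * j) / 2 = k := by push_cast; omega
    rw [h1, if_pos (Int.even_iff.2 hpar), if_neg (Int.not_even_iff.2 (by omega)), zero_mul,
      sub_zero, gaussBinom_succ q (m + 2), add_sub_cancel_right,
      gaussBinom_succ' q (m + 1) (k + 1), add_sub_cancel_right]
    have hpow : q ^ (k + 1).toNat * (q ^ (((m + 1 : ℕ) : ℤ) + 1 - (k + 1)).toNat *
        gaussBinom q (m + 1) k) = q ^ (m + 2) * gaussBinom q (m + 1) k := by
      rw [← mul_assoc, ← pow_add]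
      exact pow_mul_gaussBinom_congr q (by omega)
    linear_combination rrTheta q j * hpow
  · have h1 : (((m + 1 : ℕ) : ℤ) - 5 * j) / 2 = k + 1 := by push_cast; omega
    have h3 : ((m : ℤ) - 5 * (j + 1)) / 2 + 1 = k - 1 := by omega
    rw [h1, h3, if_neg (Int.not_even_iff.2 hpar), if_pos (Int.even_iff.2 (by omega)), zero_mul,
      zero_sub, gaussBinom_succ' q (m + 2), add_sub_cancel_right, gaussBinom_succ q (m + 1) k]
    have hpow : q ^ (((m + 2 : ℕ) : ℤ) + 1 - (k + 1)).toNat * (q ^ k.toNat *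
        gaussBinom q (m + 1) k) = q ^ (m + 2) * gaussBinom q (m + 1) k := by
      rw [← mul_assoc, ← pow_add]
      exact pow_mul_gaussBinom_congr q (by omega)
    have htheta : rrTheta q j * q ^ (((m + 2 : ℕ) : ℤ) + 1 - (k + 1)).toNat *
        gaussBinom q (m + 1) (k - 1) =
        -(rrTheta q (j + 1) * q ^ (k - 1).toNat * gaussBinom q (m + 1) (k - 1)) := by
      by_cases hk1 : 0 ≤ k - 1 ∧ k - 1 ≤ (m + 1 : ℕ)
      · have := pow_mul_rrTheta_add_one q (j := j) (a := (k - 1).toNat)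
          (b := (((m + 2 : ℕ) : ℤ) + 1 - (k + 1)).toNat) (by omega)
        linear_combination gaussBinom q (m + 1) (k - 1) * this
      · rw [gaussBinom_eq_zero q (by omega)]
        ring
    linear_combination rrTheta q j * hpow + htheta

lemma schurAltSum_zero : schurAltSum q 0 = 1 := by
  rw [schurAltSum, finsum_eq_single _ 0 fun j hj => ?_]
  · simp [schurTerm]
  · rw [schurTerm, gaussBinom_eq_zero q (by omega), mul_zero]

lemma schurAltSum_one : schurAltSum q 1 = 1 := by
  rw [schurAltSum, finsum_eq_single _ 0 fun j hj => ?_]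
  · simp [schurTerm]
  · rw [schurTerm, gaussBinom_eq_zero q (by omega), mul_zero]

theorem schurAltSum_add_two (m : ℕ) :
    schurAltSum q (m + 2) = schurAltSum q (m + 1) + q ^ (m + 2) * schurAltSum q m := by
  have hT := hasFiniteSupport_schurTerm q
  have hE := hasFiniteSupport_schurCorrection q m
  have hE' : HasFiniteSupport fun j => schurCorrection q m (j + 1) :=
    hE.comp_of_injective (add_left_injective 1)
  rw [schurAltSum, finsum_congr (schurTerm_add_two q m),
    finsum_add_distrib (by fun_prop) (by fun_prop), finsum_sub_comp_add_one hE, add_zero,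
    finsum_add_distrib (hT _) (by fun_prop), ← mul_finsum' _ _ (hT m)]
  rfl

end Schur

lemma constantCoeff_qPoch_X (n : ℕ) : constantCoeff (qPoch (X : ℤ⟦X⟧) n) = 1 := by
  simp [qPoch]

lemma qBinom_eq_gaussBinom (r n : ℕ) : qBinom r n = gaussBinom X r n := by
  rw [qBinom]
  split_ifs with h
  · change qPoch X r * invOfUnit (qPoch X n * qPoch X (r - n)) 1 = _
    rw [← gaussBinom_mul_qPoch_mul_qPoch X h, mul_assoc,
      mul_invOfUnit _ _ (by simp [constantCoeff_qPoch_X]), mul_one]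
  · exact (gaussBinom_eq_zero X (Or.inr (by omega))).symm

lemma schurB_eq_sum_range {m K : ℕ} (hK : m < K) :
    schurB m = ∑ n ∈ range K, (X : ℤ⟦X⟧) ^ (n * (n + 1)) * gaussBinom X (m - n : ℕ) n := by
  simp only [schurB, qBinom_eq_gaussBinom]
  refine sum_subset (range_subset_range.2 hK) fun n _ hn => ?_
  rw [gaussBinom_eq_zero X (Or.inr (by simp only [mem_range, not_lt] at hn; omega)), mul_zero]

lemma schurB_add_two (m : ℕ) : schurB (m + 2) = schurB (m + 1) + X ^ (m + 2) * schurB m := by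
  have hterm : ∀ n : ℕ, (X : ℤ⟦X⟧) ^ ((n + 1) * (n + 1 + 1)) *
      gaussBinom X (m + 2 - (n + 1) : ℕ) (n + 1 : ℕ) =
      X ^ ((n + 1) * (n + 1 + 1)) * gaussBinom X (m + 1 - (n + 1) : ℕ) (n + 1 : ℕ) +
        X ^ (m + 2) * (X ^ (n * (n + 1)) * gaussBinom X (m - n : ℕ) n) := by
    intro n
    rcases le_or_gt n m with hn | hn
    · rw [show m + 2 - (n + 1) = m - n + 1 by omega, show m + 1 - (n + 1) = m - n by omega,
        gaussBinom_succ', mul_add, Nat.cast_succ n, add_sub_cancel_right, ← mul_assoc,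
        ← mul_assoc, ← pow_add, ← pow_add]
      congr 1
      refine pow_mul_gaussBinom_congr X fun _ _ => ?_
      have : (n + 1) * (n + 1 + 1) = n * (n + 1) + 2 * n + 2 := by ring
      omega
    · rw [gaussBinom_eq_zero X (Or.inr (by omega : ((m + 2 - (n + 1) : ℕ) : ℤ) < (n + 1 : ℕ))),
        gaussBinom_eq_zero X (Or.inr (by omega : ((m + 1 - (n + 1) : ℕ) : ℤ) < (n + 1 : ℕ))),
        gaussBinom_eq_zero X (Or.inr (by omega : ((m - n : ℕ) : ℤ) < n))]
      ring
  rw [schurB_eq_sum_range (by omega : m + 2 < m + 3),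
    schurB_eq_sum_range (by omega : m + 1 < m + 3), schurB_eq_sum_range (by omega : m < m + 2),
    sum_range_succ', sum_range_succ' _ (m + 2),
    sum_congr rfl fun n _ => hterm n, sum_add_distrib, mul_sum]
  simp only [Nat.cast_zero, gaussBinom_zero_right]
  ring

lemma schurB_eq_schurAltSum (m : ℕ) : schurB m = schurAltSum X m := by
  induction m using Nat.twoStepInduction with
  | zero => simp [schurB_eq_sum_range (by omega : 0 < 1), schurAltSum_zero]
  | one =>
    simp [schurB_eq_sum_range (by omega : 1 < 2), schurAltSum_one, sum_range_succ, gaussBinom]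
  | more m ih₀ ih₁ => rw [schurB_add_two, schurAltSum_add_two, ih₀, ih₁]

lemma pow_dvd_schurB_sub {k K : ℕ} (hkK : k ≤ K) : (X : ℤ⟦X⟧) ^ k ∣ schurB K - schurB k := by
  refine pow_dvd_sub_of_forall_pow_succ_dvd_sub (fun K => ?_) hkK
  rcases K with _ | K
  · simp [schurB_eq_schurAltSum, schurAltSum_zero, schurAltSum_one]
  · rw [schurB_add_two, add_sub_cancel_left]
    exact dvd_mul_right _ _

lemma pow_dvd_Qprod_sub {k K : ℕ} (hkK : k ≤ K) : (X : ℤ⟦X⟧) ^ k ∣ Qprod K - Qprod k := by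
  refine pow_dvd_sub_of_forall_pow_succ_dvd_sub (fun K => ?_) hkK
  set f : ℤ⟦X⟧ := (1 - X ^ (5 * K + 2)) * (1 - X ^ (5 * K + 3))
  have hf : f * invOfUnit f 1 = 1 := mul_invOfUnit _ _ (by simp [f])
  have hstep : Qprod (K + 1) - Qprod K = Qprod K * invOfUnit f 1 * (1 - f) := by
    rw [Qprod, prod_range_succ, ← Qprod]
    linear_combination Qprod K * hf
  have hf₁ : 1 - f = X ^ (K + 1) * (X ^ (4 * K + 1) + X ^ (4 * K + 2) - X ^ (9 * K + 4)) := by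
    ring
  rw [hstep, hf₁]
  exact dvd_mul_of_dvd_right (dvd_mul_right _ _) _

lemma Qprod_mul_qPochFive (M : ℕ) : Qprod M * (qPochFive X 2 M * qPochFive X 3 M) = 1 := by
  rw [Qprod, qPochFive, qPochFive, ← prod_mul_distrib, ← prod_mul_distrib]
  exact prod_eq_one fun j _ => by rw [mul_comm]; exact mul_invOfUnit _ _ (by simp)

lemma qPoch_mul_Qprod (M : ℕ) :
    qPoch X (5 * M) * Qprod M = tripleProductSum X M M * qPoch (X ^ 5) M := by
  rw [qPoch_five_mul, ← qPochFive_five, ← qPochFive_one_mul_qPochFive_four]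
  linear_combination
    (qPochFive X 1 M * qPochFive X 4 M * qPochFive X 5 M) * Qprod_mul_qPochFive M

lemma pow_dvd_rrTheta_mul {m : ℕ} {j : ℤ} {y : ℤ⟦X⟧} (h : rrExponent j < m → X ^ m ∣ y) :
    X ^ m ∣ rrTheta X j * y := by
  rcases le_or_gt m (rrExponent j) with hj | hj
  · exact ((pow_dvd_pow X hj).mul_left _).mul_right _
  · exact (h hj).mul_left _

theorem pow_dvd_schurB_sub_Qprod {m M : ℕ} (hM : 7 * m ≤ M) :
    (X : ℤ⟦X⟧) ^ m ∣ schurB M - Qprod M := by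
  have hP : IsUnit (qPoch (X : ℤ⟦X⟧) (5 * M)) :=
    isUnit_iff_constantCoeff.2 (by rw [constantCoeff_qPoch_X]; exact isUnit_one)
  have hT := hasFiniteSupport_schurTerm (X : ℤ⟦X⟧) M
  have hJ := hasFiniteSupport_rrTheta_mul_gaussBinom (X : ℤ⟦X⟧) (M + M) M
  rw [← hP.dvd_mul_left, mul_sub, qPoch_mul_Qprod, schurB_eq_schurAltSum, schurAltSum,
    tripleProductSum, mul_finsum, finsum_mul, ← finsum_sub_distrib (by fun_prop) (by fun_prop)]
  refine dvd_finsum fun j => ?_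
  have hj := natAbs_le_rrExponent j
  rw [schurTerm, show ∀ P θ g h Q : ℤ⟦X⟧,
    P * (θ * g) - θ * h * Q = θ * (g * P - 1) - θ * (h * Q - 1) by intros; ring]
  refine dvd_sub (pow_dvd_rrTheta_mul fun hjm => ?_) (pow_dvd_rrTheta_mul fun hjm => ?_)
  · exact pow_dvd_gaussBinom_mul_qPoch_sub_one X (by omega) (by omega) (by omega) (by omega)
      (by omega)
  · refine (pow_dvd_pow X (by omega : m ≤ 5 * m)).trans ?_
    rw [pow_mul]
    exact pow_dvd_gaussBinom_mul_qPoch_sub_one (X ^ 5) (by omega) (by omega) (by omega) (by omega)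
      (by omega)

/-- `B_m` agrees with `Q_m` through degree `m−1`:  `B_m − Q_m ∈ q^m ℤ⟦q⟧`. -/
theorem schurB_agrees_with_Qprod (m : ℕ) :
    (PowerSeries.X : PowerSeries ℤ) ^ m ∣ schurB m - Qprod m := by
  have hB := pow_dvd_schurB_sub (by omega : m ≤ 7 * m)
  have hQ := pow_dvd_Qprod_sub (by omega : m ≤ 7 * m)
  have hBQ := pow_dvd_schurB_sub_Qprod (le_refl (7 * m))
  convert dvd_add (dvd_sub hBQ hB) hQ using 1
  ring
end
end
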